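/- Let ε > 0 and let x = (x₀, 𝐱) ∈ ℝ × ℝ³. Set z² = (1−iε)x₀² − ‖𝐱‖² ∈ ℂ and x_E = √(x₀² + ‖𝐱‖²). Then the modulus of the principal square root of −z² satisfies |√(−z²)| ≤ (1+ε²)^{1/4} · x_E and |√(−z²)| ≥ (1/ε + √(1 + 1/ε²))^{−1/2} · x_E. Equivalently, since |√w| = |w|^{1/2} for the principal branch, (1/ε + √(1+1/ε²))⁻¹ · x_E² ≤ |(1−iε)x₀² − ‖𝐱‖²| ≤ √(1+ε²) · x_E². -/

import Mathlib

/-!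
With `a = x₀²`, `b = ‖𝐱‖²` and `w = (1 - iε)a - b` one has `‖w‖² = (a - b)² + ε²a²`, a quadratic
form to be compared with `(a + b)²`: for `a, b ≥ 0` it is at most `(1 + ε²)(a + b)²`, and, with
`s = √(1 + ε²)`, `(1 + s)²‖w‖² - ε²(a + b)²` is a sum of squares with nonnegative coefficients.
Since `1/ε + √(1 + 1/ε²) = (1 + s)/ε`, these are the bounds on `‖w‖`, and the bounds on
`|√(-z²)| = √‖w‖` are their square roots.
-/

open Complex

lemma Complex.norm_cpow_one_div_two (z : ℂ) : ‖z ^ ((1 : ℂ) / 2)‖ = √‖z‖ := by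
  have h : (1 : ℂ) / 2 = ((1 / 2 : ℝ) : ℂ) := by push_cast; rfl
  rw [h, norm_cpow_real, Real.sqrt_eq_rpow]

lemma Real.rpow_one_div_four_eq_sqrt_sqrt {x : ℝ} (hx : 0 ≤ x) :
    x ^ ((1 : ℝ) / 4) = √(√x) := by
  rw [Real.sqrt_eq_rpow, Real.sqrt_eq_rpow, ← Real.rpow_mul hx]
  norm_num

lemma Real.rpow_neg_one_div_two_eq_sqrt_inv {x : ℝ} (hx : 0 ≤ x) :
    x ^ (-(1 : ℝ) / 2) = √x⁻¹ := by
  rw [neg_div, Real.rpow_neg hx, Real.sqrt_inv, Real.sqrt_eq_rpow]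

lemma one_div_add_sqrt_one_add_one_div_sq {ε : ℝ} (hε : 0 < ε) :
    1 / ε + √(1 + 1 / ε ^ 2) = (1 + √(1 + ε ^ 2)) / ε := by
  have h : 1 + 1 / ε ^ 2 = (1 + ε ^ 2) / ε ^ 2 := by field_simp; ring
  rw [h, Real.sqrt_div' _ (sq_nonneg ε), Real.sqrt_sq hε.le, add_div]

lemma norm_sq_one_sub_mul_I_mul_sub (ε a b : ℝ) :
    ‖(1 - ε * I) * a - b‖ ^ 2 = (a - b) ^ 2 + (ε * a) ^ 2 := by
  rw [Complex.sq_norm, Complex.normSq_apply]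
  simp only [sub_re, sub_im, mul_re, mul_im, one_re, one_im, I_re, I_im, ofReal_re, ofReal_im]
  ring

lemma norm_one_sub_mul_I_mul_sub_le (ε : ℝ) {a b : ℝ} (ha : 0 ≤ a) (hb : 0 ≤ b) :
    ‖(1 - ε * I) * a - b‖ ≤ √(1 + ε ^ 2) * (a + b) := by
  refine le_of_pow_le_pow_left₀ two_ne_zero (by positivity) ?_
  rw [norm_sq_one_sub_mul_I_mul_sub, mul_pow (√(1 + ε ^ 2)), Real.sq_sqrt (by positivity)]
  nlinarith [mul_nonneg ha hb, mul_nonneg (sq_nonneg ε) (mul_nonneg ha hb),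
    mul_nonneg (sq_nonneg ε) (mul_nonneg hb hb)]

lemma abs_div_one_add_sqrt_mul_le_norm_one_sub_mul_I_mul_sub (ε a b : ℝ) :
    |ε| / (1 + √(1 + ε ^ 2)) * (a + b) ≤ ‖(1 - ε * I) * a - b‖ := by
  set s := √(1 + ε ^ 2)
  have hs : ε ^ 2 = s ^ 2 - 1 := by rw [Real.sq_sqrt (by positivity)]; ring
  have hs_one : 1 ≤ s := Real.one_le_sqrt.mpr (by nlinarith)
  rw [div_mul_eq_mul_div, div_le_iff₀ (by positivity)]
  refine le_of_pow_le_pow_left₀ two_ne_zero (by positivity) ?_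
  rw [mul_pow, mul_pow, norm_sq_one_sub_mul_I_mul_sub, mul_pow, sq_abs, hs]
  have hdiff : (1 + s) ^ 2 * ((a - b) ^ 2 + (s ^ 2 - 1) * a ^ 2) - (s ^ 2 - 1) * (a + b) ^ 2 =
      (1 + s) * (2 * (b - s * a) ^ 2 + (s - 1) * (s ^ 2 - 1) * a ^ 2) := by ring
  have hs_sq : 0 ≤ s ^ 2 - 1 := by nlinarith
  have hdiff_nonneg : 0 ≤ (1 + s) * (2 * (b - s * a) ^ 2 + (s - 1) * (s ^ 2 - 1) * a ^ 2) := by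
    positivity
  linarith

/-- Euclidean bounds on the continued square interval:
for `ε > 0` and `x = (x₀, 𝐱) ∈ ℝ × ℝ³`, with `z² = (1−iε)x₀² − ‖𝐱‖²` and
`x_E = √(x₀² + ‖𝐱‖²)`, the modulus of the principal square root of `−z²` satisfies
`|√(−z²)| ≤ (1+ε²)^{1/4}·x_E` and `|√(−z²)| ≥ (1/ε + √(1+1/ε²))^{−1/2}·x_E`;
equivalently `(1/ε + √(1+1/ε²))⁻¹·x_E² ≤ |(1−iε)x₀² − ‖𝐱‖²| ≤ √(1+ε²)·x_E²`. -/
theorem sqrt_interval_euclidean_bounds (ε : ℝ) (hε : 0 < ε)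
    (x₀ : ℝ) (x : EuclideanSpace ℝ (Fin 3)) :
    ‖(((‖x‖ : ℂ) ^ 2 - (1 - (ε : ℂ) * Complex.I) * (x₀ : ℂ) ^ 2) ^ ((1 : ℂ) / 2))‖ ≤
        (1 + ε ^ 2) ^ ((1 : ℝ) / 4) * Real.sqrt (x₀ ^ 2 + ‖x‖ ^ 2) ∧
    (1 / ε + Real.sqrt (1 + 1 / ε ^ 2)) ^ (-(1 : ℝ) / 2) * Real.sqrt (x₀ ^ 2 + ‖x‖ ^ 2) ≤
        ‖(((‖x‖ : ℂ) ^ 2 - (1 - (ε : ℂ) * Complex.I) * (x₀ : ℂ) ^ 2) ^ ((1 : ℂ) / 2))‖ ∧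
    (1 / ε + Real.sqrt (1 + 1 / ε ^ 2))⁻¹ * (x₀ ^ 2 + ‖x‖ ^ 2) ≤
        ‖((1 - (ε : ℂ) * Complex.I) * (x₀ : ℂ) ^ 2 - (‖x‖ : ℂ) ^ 2)‖ ∧
    ‖((1 - (ε : ℂ) * Complex.I) * (x₀ : ℂ) ^ 2 - (‖x‖ : ℂ) ^ 2)‖ ≤
        Real.sqrt (1 + ε ^ 2) * (x₀ ^ 2 + ‖x‖ ^ 2) := by
  have hneg : ‖(‖x‖ : ℂ) ^ 2 - (1 - ε * I) * (x₀ : ℂ) ^ 2‖ =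
      ‖(1 - ε * I) * (x₀ : ℂ) ^ 2 - (‖x‖ : ℂ) ^ 2‖ := by
    rw [← norm_neg, neg_sub]
  have hK : (1 / ε + √(1 + 1 / ε ^ 2))⁻¹ = |ε| / (1 + √(1 + ε ^ 2)) := by
    rw [one_div_add_sqrt_one_add_one_div_sq hε, inv_div, abs_of_pos hε]
  have hK_nonneg : 0 ≤ 1 / ε + √(1 + 1 / ε ^ 2) := by positivity
  have hlower := abs_div_one_add_sqrt_mul_le_norm_one_sub_mul_I_mul_sub ε (x₀ ^ 2) (‖x‖ ^ 2)
  have hupper := norm_one_sub_mul_I_mul_sub_le ε (sq_nonneg x₀) (sq_nonneg ‖x‖)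
  push_cast at hlower hupper
  rw [← hK] at hlower
  rw [Complex.norm_cpow_one_div_two, hneg, Real.rpow_one_div_four_eq_sqrt_sqrt (by positivity),
    Real.rpow_neg_one_div_two_eq_sqrt_inv hK_nonneg, ← Real.sqrt_mul' _ (by positivity),
    ← Real.sqrt_mul' _ (by positivity)]
  exact ⟨Real.sqrt_le_sqrt hupper, Real.sqrt_le_sqrt hlower, hlower, hupper⟩
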